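/- Let G be a group with a Conradian left-invariant order ≼ and suppose a, b ∈ G satisfy b·a·b⁻¹ = a^r in the sense that b·a·b⁻¹ and a generate a rank-1 abelian group with b·a·b⁻¹ = aʳ for a rational r ≠ 1 (e.g., b·a·b⁻¹ = a² in the Baumslag–Solitar group). Then aⁿ ≺ max(b, b⁻¹) for all n ∈ ℤ, i.e., a is infinitely smaller than b. -/

import Mathlib

/-- The single relation b·a·b⁻¹·(a²)⁻¹ defining the Baumslag–Solitar group B(1,2),
with `false` playing the role of `a` and `true` that of `b`. -/
def bsRels : Set (FreeGroup Bool) :=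
  {FreeGroup.of true * FreeGroup.of false * (FreeGroup.of true)⁻¹ *
    (FreeGroup.of false * FreeGroup.of false)⁻¹}

/-- The Baumslag–Solitar group B(1,2) = ⟨a, b ∣ b·a·b⁻¹ = a²⟩. -/
abbrev BS12 : Type := PresentedGroup bsRels

/-- The generator a of B(1,2). -/
def aBS : BS12 := PresentedGroup.of false

/-- The generator b of B(1,2). -/
def bBS : BS12 := PresentedGroup.of true

section
variable {G : Type*} [Group G]

/-- A left-invariant total order on G, given as a relation. -/
def IsLeftTotalOrder (le : G → G → Prop) : Prop :=
  (∀ a, le a a) ∧ (∀ a b c, le a b → le b c → le a c) ∧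
  (∀ a b, le a b → le b a → a = b) ∧ (∀ a b, le a b ∨ le b a) ∧
  (∀ f a b, le a b → le (f * a) (f * b))

/-- The strict relation associated to `le`. -/
def clt (le : G → G → Prop) (a b : G) : Prop := le a b ∧ ¬ le b a

/-- A Conradian (C-)ordering on G. -/
def IsConradianOrder (le : G → G → Prop) : Prop :=
  IsLeftTotalOrder le ∧
  ∀ f g : G, clt le 1 f → clt le 1 g → ∃ n : ℕ, 0 < n ∧ clt le g (f * g ^ n)

end

/-
Conjugation by `b` doubles every power `c = aⁿ`, so `b⁻¹` halves the even powers of `c`. Suppose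
`c` dominates the positive one of `b`, `b⁻¹`. If that is `b`, then `g = b⁻¹c⁴` and `f = b⁻¹g` are
positive and all powers of `g` stay below `c⁴`. If it is `b⁻¹`, all powers of `b⁻¹` stay below `c²`,
and `f = b⁻²`, `g = b⁻¹c⁴` are positive. Either way `f gᵏ ≤ g` for every `k`, against the Conrad
property.
-/

namespace IsLeftTotalOrder

variable {G : Type*} [Group G] {le : G → G → Prop}

noncomputable abbrev toLinearOrder (h : IsLeftTotalOrder le) : LinearOrder G where
  le := le
  lt := clt le
  le_refl := h.1
  le_trans := h.2.1
  lt_iff_le_not_ge _ _ := Iff.rfl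
  le_antisymm := h.2.2.1
  le_total := h.2.2.2.1
  toDecidableLE := Classical.decRel _

theorem mulLeftMono (h : IsLeftTotalOrder le) : @MulLeftMono G _ h.toLinearOrder.toLE :=
  ⟨fun f _ _ => h.2.2.2.2 f _ _⟩

end IsLeftTotalOrder

def IsConradian (G : Type*) [Group G] [LT G] : Prop :=
  ∀ f g : G, 1 < f → 1 < g → ∃ n : ℕ, 0 < n ∧ g < f * g ^ n

theorem IsConradian.not_forall_mul_pow_le {G : Type*} [Group G] [Preorder G] (hC : IsConradian G)
    {f g : G} (hf : 1 < f) (hg : 1 < g) : ¬ ∀ k : ℕ, f * g ^ k ≤ g := fun hle =>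
  let ⟨n, _, hlt⟩ := hC f g hf hg
  (hlt.trans_le (hle n)).false

section

variable {G : Type*} [Group G] {a b : G}

theorem SemiconjBy.pow_right_two_mul (h : SemiconjBy b a (a ^ 2)) (y : ℕ) :
    SemiconjBy b (a ^ y) (a ^ (2 * y)) := by
  simpa only [← pow_mul] using h.pow_right y

variable [Preorder G] [MulLeftMono G]

theorem inv_mul_pow_pow_le (h : SemiconjBy b a (a ^ 2)) (hb : 1 ≤ b) (ha : 1 ≤ a) (y k : ℕ) :
    (b⁻¹ * a ^ y) ^ k ≤ a ^ y := by
  induction k with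
  | zero => simpa using one_le_pow_of_one_le' ha y
  | succ k ih =>
    calc (b⁻¹ * a ^ y) ^ (k + 1) = b⁻¹ * a ^ y * (b⁻¹ * a ^ y) ^ k := pow_succ' _ _
      _ ≤ b⁻¹ * a ^ y * a ^ y := mul_le_mul_right ih _
      _ = b⁻¹ * a ^ (2 * y) := by rw [mul_assoc, ← pow_add, two_mul]
      _ ≤ a ^ y := inv_mul_le_of_le_mul <| by
        rw [(h.pow_right_two_mul y).eq]
        exact le_mul_of_one_le_right' hb

theorem inv_pow_le_sq (h : SemiconjBy b a (a ^ 2)) (ha : 1 ≤ a) (hba : b⁻¹ ≤ a) (j : ℕ) :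
    b⁻¹ ^ j ≤ a ^ 2 := by
  induction j with
  | zero => simpa using one_le_pow_of_one_le' ha 2
  | succ j ih =>
    calc b⁻¹ ^ (j + 1) = b⁻¹ * b⁻¹ ^ j := pow_succ' _ _
      _ ≤ b⁻¹ * a ^ 2 := mul_le_mul_right ih _
      _ = a * b⁻¹ := h.inv_symm_left.eq
      _ ≤ a * a := mul_le_mul_right hba _
      _ = a ^ 2 := (sq a).symm

theorem inv_mul_pow_pow_le_pow_mul_inv_pow (h : SemiconjBy b a (a ^ 2)) (ha : 1 ≤ a) (y k : ℕ) :
    (b⁻¹ * a ^ (2 * y)) ^ k ≤ a ^ (2 * y) * b⁻¹ ^ k := by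
  induction k with
  | zero => simpa using one_le_pow_of_one_le' ha _
  | succ k ih =>
    calc (b⁻¹ * a ^ (2 * y)) ^ (k + 1) = b⁻¹ * a ^ (2 * y) * (b⁻¹ * a ^ (2 * y)) ^ k :=
          pow_succ' _ _
      _ ≤ b⁻¹ * a ^ (2 * y) * (a ^ (2 * y) * b⁻¹ ^ k) := mul_le_mul_right ih _
      _ = b⁻¹ * a ^ (2 * (2 * y)) * b⁻¹ ^ k := by rw [two_mul (2 * y), pow_add]; group
      _ = a ^ (2 * y) * b⁻¹ ^ (k + 1) := by
        rw [(h.pow_right_two_mul (2 * y)).inv_symm_left.eq, mul_assoc, ← pow_succ']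

end

namespace IsConradian

variable {G : Type*} [Group G] [LinearOrder G] [MulLeftMono G] {a b : G}

theorem lt_of_semiconjBy_sq_of_one_lt (hC : IsConradian G) (h : SemiconjBy b a (a ^ 2))
    (hb : 1 < b) : a < b := by
  by_contra! hba
  have ha : 1 < a := hb.trans_le hba
  have hbb : b * b < a ^ 4 := calc
    b * b ≤ b * a := mul_le_mul_right hba b
    _ = a ^ 2 * b := h.eq
    _ ≤ a ^ 2 * a := mul_le_mul_right hba _
    _ = a ^ 3 := (pow_succ a 2).symm
    _ < a ^ 4 := pow_lt_pow_right' ha (by norm_num)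
  have hg : 1 < b⁻¹ * a ^ 4 := lt_inv_mul_iff_lt.mpr ((lt_mul_of_one_lt_right' b hb).trans hbb)
  have hf : 1 < b⁻¹ * (b⁻¹ * a ^ 4) := by
    rw [← mul_assoc, ← mul_inv_rev]
    exact lt_inv_mul_iff_lt.mpr hbb
  refine hC.not_forall_mul_pow_le hf hg fun k => ?_
  rw [mul_assoc, ← pow_succ']
  exact mul_le_mul_right (inv_mul_pow_pow_le h hb.le ha.le 4 (k + 1)) _

theorem lt_inv_of_semiconjBy_sq_of_lt_one (hC : IsConradian G) (h : SemiconjBy b a (a ^ 2))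
    (hb : b < 1) : a < b⁻¹ := by
  by_contra! hba
  have hd : 1 < b⁻¹ := one_lt_inv'.mpr hb
  have ha : 1 ≤ a := hd.le.trans hba
  have hg : 1 < b⁻¹ * a ^ (2 * 2) :=
    hd.trans_le (le_mul_of_one_le_right' (one_le_pow_of_one_le' ha _))
  have hf : 1 < b⁻¹ * b⁻¹ := hd.trans (lt_mul_of_one_lt_right' _ hd)
  refine hC.not_forall_mul_pow_le hf hg fun k => ?_
  calc b⁻¹ * b⁻¹ * (b⁻¹ * a ^ (2 * 2)) ^ k
      ≤ b⁻¹ * b⁻¹ * (a ^ (2 * 2) * b⁻¹ ^ k) :=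
        mul_le_mul_right (inv_mul_pow_pow_le_pow_mul_inv_pow h ha 2 k) _
    _ = b⁻¹ * (a ^ 2 * b⁻¹ ^ (k + 1)) := by
        rw [mul_assoc, ← mul_assoc b⁻¹ (a ^ (2 * 2)), (h.pow_right_two_mul 2).inv_symm_left.eq, mul_assoc,
          ← pow_succ']
    _ ≤ b⁻¹ * (a ^ 2 * a ^ 2) := mul_le_mul_right (mul_le_mul_right (inv_pow_le_sq h ha hba _) _) _
    _ = b⁻¹ * a ^ (2 * 2) := by rw [← pow_add, two_mul]

end IsConradian

theorem bBS_semiconjBy : SemiconjBy bBS aBS (aBS ^ 2) := by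
  have h := PresentedGroup.mk_eq_mk_of_mul_inv_mem (Set.mem_singleton _ : _ ∈ bsRels)
  simp only [map_mul, map_inv] at h
  rw [SemiconjBy, ← mul_inv_eq_iff_eq_mul, sq]
  exact h

theorem bBS_ne_one : bBS ≠ 1 := by
  have hrel : ∀ r ∈ bsRels,
      FreeGroup.lift (fun x : Bool => if x then Multiplicative.ofAdd (1 : ℤ) else 1) r = 1 := by
    rintro r rfl
    simp
  intro hb
  have := congrArg (PresentedGroup.toGroup hrel) hb
  rw [bBS, PresentedGroup.toGroup.of] at this
  simp at this

/-- For any Conradian left-order on B(1,2), aⁿ ≺ max(b, b⁻¹) for all n ∈ ℤ,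
i.e. a is infinitely smaller than b. -/
theorem aBS_infinitely_smaller (le : BS12 → BS12 → Prop) (h : IsConradianOrder le)
    (n : ℤ) :
    (le 1 bBS → clt le (aBS ^ n) bBS) ∧ (le bBS 1 → clt le (aBS ^ n) bBS⁻¹) := by
  let _ : LinearOrder BS12 := h.1.toLinearOrder
  have _ : MulLeftMono BS12 := h.1.mulLeftMono
  have hC : IsConradian BS12 := h.2
  have hrel : SemiconjBy bBS (aBS ^ n) ((aBS ^ n) ^ 2) := by
    simpa only [← zpow_natCast, ← zpow_mul, mul_comm] using bBS_semiconjBy.zpow_right n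
  exact ⟨fun hb => hC.lt_of_semiconjBy_sq_of_one_lt hrel (lt_of_le_of_ne hb bBS_ne_one.symm),
    fun hb => hC.lt_inv_of_semiconjBy_sq_of_lt_one hrel (lt_of_le_of_ne hb bBS_ne_one)⟩
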